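/- arXiv:1509.00273 — 2 statements merged into one kernel-verified Lean document; each statement's English description precedes it below -/
import Mathlib

section
/- Let 𝒮 be a sparse collection of dyadic cubes in ℝ^n, let w be a weight, and let γ ∈ [0,1). Then there is a constant C, depending only on γ, such that for every dyadic cube R: ∑_{Q∈𝒮, Q⊆R} ⟨w⟩_Q^γ |Q| ≤ C ⟨w⟩_R^γ |R|. -/
/-!
Write `λ = ⟨w⟩_R`. If `2^k λ ≤ ⟨w⟩_Q` for a cube `Q ⊆ R`, then `Q` lies in the union of the maximal
dyadic subcubes of `R` with average at least `2^k λ`; these are disjoint, so the union has measure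
at most `2^{-k} |R|`, and by sparseness the cubes of `𝒮` at this level have total measure at most
`2^{1-k} |R|`. Bounding `⟨w⟩_Q^γ` by `λ^γ` plus the terms `(2^{k+1} λ)^γ` over all levels `k` that
`Q` reaches, the sum becomes a geometric series in `2^{(γ-1)k}`, which converges because `γ < 1`.
-/

open MeasureTheory ENNReal NNReal Set

noncomputable section

namespace Paper

abbrev Rn (n : ℕ) := Fin n → ℝ

/-- A dyadic cube in `ℝⁿ`: `∏ᵢ [2^{-k} mᵢ, 2^{-k}(mᵢ+1))`. -/
def IsDyadicCube (n : ℕ) (Q : Set (Rn n)) : Prop :=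
  ∃ (k : ℤ) (m : Fin n → ℤ), Q =
    {x : Rn n | ∀ i, (2:ℝ) ^ (-k) * m i ≤ x i ∧ x i < (2:ℝ) ^ (-k) * (m i + 1)}

/-- A sparse collection of dyadic cubes. -/
def IsSparse (n : ℕ) (S : Set (Set (Rn n))) : Prop :=
  (∀ Q ∈ S, IsDyadicCube n Q) ∧
  ∃ E : Set (Rn n) → Set (Rn n),
    (∀ Q ∈ S, E Q ⊆ Q ∧ MeasurableSet (E Q) ∧ volume Q ≤ 2 * volume (E Q)) ∧
    S.Pairwise (fun Q Q' => Disjoint (E Q) (E Q'))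

/-- Average `⟨w⟩_Q = |Q|⁻¹ ∫_Q w`. -/
def dAvg {n : ℕ} (w : Rn n → ℝ≥0∞) (Q : Set (Rn n)) : ℝ≥0∞ :=
  (volume Q)⁻¹ * ∫⁻ x in Q, w x

/-- Weighted average `⟨f⟩_Q^σ = σ(Q)⁻¹ ∫_Q f σ`. -/
def dAvgW {n : ℕ} (σ f : Rn n → ℝ≥0∞) (Q : Set (Rn n)) : ℝ≥0∞ :=
  (∫⁻ x in Q, σ x)⁻¹ * ∫⁻ x in Q, f x * σ x

/-- Local integrability (w.r.t. dyadic cubes). -/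
def LocInt {n : ℕ} (w : Rn n → ℝ≥0∞) : Prop :=
  ∀ Q : Set (Rn n), IsDyadicCube n Q → (∫⁻ x in Q, w x) < ∞

/-- The sparse operator `A_𝒮^r g = (∑_{Q∈𝒮} ⟨g⟩_Q^r 1_Q)^{1/r}`. -/
def sparseOp {n : ℕ} (S : Set (Set (Rn n))) (r : ℝ) (g : Rn n → ℝ≥0∞) (x : Rn n) : ℝ≥0∞ :=
  (∑' Q : S, (Q : Set (Rn n)).indicator (fun _ => (dAvg g Q) ^ r) x) ^ (1 / r)

/-- `‖g‖_{L^p(w)} = (∫ g^p w)^{1/p}`. -/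
def lpNorm {n : ℕ} (p : ℝ) (w g : Rn n → ℝ≥0∞) : ℝ≥0∞ :=
  (∫⁻ x, (g x) ^ p * w x) ^ (1 / p)

/-- `‖g‖_{L^{p,∞}(w)} = sup_{t>0} t · w({g > t})^{1/p}`. -/
def wLpNorm {n : ℕ} (p : ℝ) (w g : Rn n → ℝ≥0∞) : ℝ≥0∞ :=
  ⨆ (t : ℝ≥0) (_ : 0 < t), (t : ℝ≥0∞) * (∫⁻ x in {x | (t : ℝ≥0∞) < g x}, w x) ^ (1 / p)

/-- `‖A_𝒮^r(·σ)‖_{L^p(σ)→L^p(w)}`, the least constant in the strong-type bound. -/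
def opNormStrong {n : ℕ} (S : Set (Set (Rn n))) (r p : ℝ) (w σ : Rn n → ℝ≥0∞) : ℝ≥0∞ :=
  sInf {C : ℝ≥0∞ | ∀ f : Rn n → ℝ≥0∞, Measurable f →
    lpNorm p w (sparseOp S r (fun x => f x * σ x)) ≤ C * lpNorm p σ f}

/-- `‖A_𝒮^r(·σ)‖_{L^p(σ)→L^{p,∞}(w)}`, the least constant in the weak-type bound. -/
def opNormWeak {n : ℕ} (S : Set (Set (Rn n))) (r p : ℝ) (w σ : Rn n → ℝ≥0∞) : ℝ≥0∞ :=
  sInf {C : ℝ≥0∞ | ∀ f : Rn n → ℝ≥0∞, Measurable f →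
    wLpNorm p w (sparseOp S r (fun x => f x * σ x)) ≤ C * lpNorm p σ f}

/-- Two-weight (dyadic) `A_p` characteristic. -/
def ApChar {n : ℕ} (p : ℝ) (w σ : Rn n → ℝ≥0∞) : ℝ≥0∞ :=
  ⨆ (Q : Set (Rn n)) (_ : IsDyadicCube n Q), dAvg w Q * (dAvg σ Q) ^ (p - 1)

/-- Dyadic maximal operator. -/
def dyadicM {n : ℕ} (g : Rn n → ℝ≥0∞) (x : Rn n) : ℝ≥0∞ :=
  ⨆ (Q : Set (Rn n)) (_ : IsDyadicCube n Q ∧ x ∈ Q), dAvg g Q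

/-- Fujii–Wilson (dyadic) `A_∞` characteristic. -/
def AinfChar {n : ℕ} (w : Rn n → ℝ≥0∞) : ℝ≥0∞ :=
  ⨆ (Q : Set (Rn n)) (_ : IsDyadicCube n Q),
    (∫⁻ x in Q, w x)⁻¹ * ∫⁻ x in Q, dyadicM (Q.indicator w) x

/-- The testing constant `𝒯_s` (Theorem 1.4 uses `s = r`). -/
def testT {n : ℕ} (S : Set (Set (Rn n))) (p s : ℝ) (w σ : Rn n → ℝ≥0∞) : ℝ≥0∞ :=
  ⨆ (R : Set (Rn n)) (_ : R ∈ S),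
    (∫⁻ x in R, σ x) ^ (-(s / p)) *
      lpNorm (p / s) w (fun x => ∑' Q : {Q : Set (Rn n) // Q ∈ S ∧ Q ⊆ R},
        (Q : Set (Rn n)).indicator (fun _ => (dAvg σ Q) ^ s) x)

/-- The dual testing constant `𝒯*`. -/
def testTstar {n : ℕ} (S : Set (Set (Rn n))) (p r : ℝ) (w σ : Rn n → ℝ≥0∞) : ℝ≥0∞ :=
  ⨆ (R : Set (Rn n)) (_ : R ∈ S),
    (∫⁻ x in R, w x) ^ (-(1 - r / p)) *
      lpNorm ((p / r) / (p / r - 1)) σ (fun x => ∑' Q : {Q : Set (Rn n) // Q ∈ S ∧ Q ⊆ R},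
        (Q : Set (Rn n)).indicator (fun _ => (dAvg σ Q) ^ (r - 1) * dAvg w Q) x)

theorem rpow_le_add_tsum_ite {a l : ℝ≥0∞} {γ : ℝ} (hγ : 0 ≤ γ) (ha : a ≠ ∞)
    (hl₀ : l ≠ 0) (hl : l ≠ ∞) :
    a ^ γ ≤ l ^ γ + ∑' k : ℕ, if 2 ^ k * l ≤ a then (2 ^ (k + 1) * l) ^ γ else 0 := by
  rcases le_total a l with hal | hla
  · exact le_add_right (ENNReal.rpow_le_rpow hal hγ)
  lift a to ℝ≥0 using ha
  lift l to ℝ≥0 using hl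
  have hl₀' : 0 < l := pos_iff_ne_zero.2 (by exact_mod_cast hl₀)
  obtain ⟨k, hk, hk'⟩ :=
    exists_nat_pow_near ((one_le_div hl₀').2 (by exact_mod_cast hla)) one_lt_two
  rw [le_div_iff₀ hl₀'] at hk
  rw [div_lt_iff₀ hl₀'] at hk'
  calc (a : ℝ≥0∞) ^ γ ≤ (2 ^ (k + 1) * (l : ℝ≥0∞)) ^ γ :=
        ENNReal.rpow_le_rpow (by exact_mod_cast hk'.le) hγ
    _ = if 2 ^ k * (l : ℝ≥0∞) ≤ a then (2 ^ (k + 1) * (l : ℝ≥0∞)) ^ γ else 0 :=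
        (if_pos (by exact_mod_cast hk)).symm
    _ ≤ ∑' k : ℕ, if 2 ^ k * (l : ℝ≥0∞) ≤ a then (2 ^ (k + 1) * (l : ℝ≥0∞)) ^ γ else 0 :=
        ENNReal.le_tsum k
    _ ≤ _ := le_add_self

theorem two_pow_succ_rpow_mul_two_mul_inv_two_pow (γ : ℝ) (k : ℕ) :
    ((2:ℝ≥0∞) ^ (k + 1)) ^ γ * (2 * ((2:ℝ≥0∞) ^ k)⁻¹) = 2 ^ (1 + γ) * (2 ^ (γ - 1)) ^ k := by
  have hadd (x y : ℝ) : (2:ℝ≥0∞) ^ x * 2 ^ y = 2 ^ (x + y) :=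
    (ENNReal.rpow_add x y two_ne_zero ENNReal.ofNat_ne_top).symm
  rw [← ENNReal.rpow_natCast, ← ENNReal.rpow_natCast, ← ENNReal.rpow_natCast _ k,
    ← ENNReal.rpow_neg, ← ENNReal.rpow_mul, ← ENNReal.rpow_mul,
    show (2:ℝ≥0∞) * 2 ^ (-(k:ℝ)) = 2 ^ (1 + -(k:ℝ)) by rw [← hadd, ENNReal.rpow_one], hadd,
    hadd]
  congr 1
  push_cast
  ring

theorem tsum_two_pow_succ_mul_rpow_mul {γ : ℝ} (hγ : 0 ≤ γ) (l V : ℝ≥0∞) :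
    ∑' k : ℕ, (2 ^ (k + 1) * l) ^ γ * (2 * (2 ^ k)⁻¹ * V)
      = 2 ^ (1 + γ) * (1 - 2 ^ (γ - 1))⁻¹ * l ^ γ * V := by
  calc ∑' k : ℕ, (2 ^ (k + 1) * l) ^ γ * (2 * (2 ^ k)⁻¹ * V)
      = ∑' k : ℕ, ((2:ℝ≥0∞) ^ (k + 1)) ^ γ * (2 * (2 ^ k)⁻¹) * (l ^ γ * V) := by
        refine tsum_congr fun k => ?_
        rw [ENNReal.mul_rpow_of_nonneg _ _ hγ]
        ring
    _ = _ := by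
        simp only [two_pow_succ_rpow_mul_two_mul_inv_two_pow, ENNReal.tsum_mul_right,
          ENNReal.tsum_mul_left, ENNReal.tsum_geometric]
        ring

theorem mul_measure_biUnion_le_setLIntegral {α : Type*} [MeasurableSpace α]
    {μ : Measure α} {w : α → ℝ≥0∞} {t : ℝ≥0∞} (F : Finset (Set α))
    (hmeas : ∀ Q ∈ F, MeasurableSet Q)
    (hnest : ∀ Q ∈ F, ∀ Q' ∈ F, Disjoint Q Q' ∨ Q ⊆ Q' ∨ Q' ⊆ Q)
    (hF : ∀ Q ∈ F, t * μ Q ≤ ∫⁻ x in Q, w x ∂μ) :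
    t * μ (⋃ Q ∈ F, Q) ≤ ∫⁻ x in ⋃ Q ∈ F, Q, w x ∂μ := by
  classical
  set M := F.filter (Maximal (· ∈ F))
  have hM : ∀ Q ∈ M, Q ∈ F := fun Q hQ => (Finset.mem_filter.1 hQ).1
  have hcover : ⋃ Q ∈ F, Q = ⋃ Q ∈ M, Q := by
    refine subset_antisymm (iUnion₂_subset fun Q hQ => ?_)
      (iUnion₂_mono' fun Q hQ => ⟨Q, hM Q hQ, le_rfl⟩)
    obtain ⟨Q', hQQ', hQ'⟩ := F.exists_le_maximal hQ
    exact hQQ'.trans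
      (subset_iUnion₂ (s := fun Q (_ : Q ∈ M) => Q) Q' (Finset.mem_filter.2 ⟨hQ'.1, hQ'⟩))
  have hdisj : (M : Set (Set α)).PairwiseDisjoint id := by
    intro Q hQ Q' hQ' hne
    have hQmax := (Finset.mem_filter.1 hQ).2
    have hQ'max := (Finset.mem_filter.1 hQ').2
    rcases hnest Q (hM Q hQ) Q' (hM Q' hQ') with h | h | h
    · exact h
    · exact absurd (hQmax.eq_of_le hQ'max.1 h) hne
    · exact absurd (hQ'max.eq_of_le hQmax.1 h).symm hne
  rw [hcover, measure_biUnion_finset (f := fun Q => Q) hdisj fun Q hQ => hmeas Q (hM Q hQ),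
    lintegral_biUnion_finset (t := fun Q => Q) hdisj fun Q hQ => hmeas Q (hM Q hQ),
    Finset.mul_sum]
  exact Finset.sum_le_sum fun Q hQ => hF Q (hM Q hQ)

def dyadicCube (n : ℕ) (k : ℤ) (m : Fin n → ℤ) : Set (Rn n) :=
  {x : Rn n | ∀ i, (2:ℝ) ^ (-k) * m i ≤ x i ∧ x i < (2:ℝ) ^ (-k) * (m i + 1)}

theorem isDyadicCube_iff {n : ℕ} {Q : Set (Rn n)} :
    IsDyadicCube n Q ↔ ∃ k m, Q = dyadicCube n k m :=
  Iff.rfl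

theorem le_two_zpow_mul_and_lt_iff_floor_eq (k m : ℤ) (y : ℝ) :
    (2:ℝ) ^ (-k) * m ≤ y ∧ y < (2:ℝ) ^ (-k) * (m + 1) ↔ ⌊(2:ℝ) ^ k * y⌋ = m := by
  have h : (0:ℝ) < 2 ^ k := by positivity
  rw [Int.floor_eq_iff, zpow_neg, inv_mul_le_iff₀ h, lt_inv_mul_iff₀ h]

theorem mem_dyadicCube_iff {n : ℕ} {k : ℤ} {m : Fin n → ℤ} {x : Rn n} :
    x ∈ dyadicCube n k m ↔ ∀ i, ⌊(2:ℝ) ^ k * x i⌋ = m i :=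
  forall_congr' fun i => le_two_zpow_mul_and_lt_iff_floor_eq k (m i) (x i)

theorem floor_two_zpow_mul_eq_floor_div (k : ℤ) (d : ℕ) (y : ℝ) :
    ⌊(2:ℝ) ^ k * y⌋ = ⌊(2:ℝ) ^ (k + d) * y⌋ / (2 ^ d : ℕ) := by
  rw [← Int.floor_div_natCast, zpow_add₀ two_ne_zero, zpow_natCast]
  push_cast
  field_simp

theorem dyadicCube_subset_of_mem {n : ℕ} {k k' : ℤ} {m m' : Fin n → ℤ} {x : Rn n} (hk : k' ≤ k)
    (hx : x ∈ dyadicCube n k m) (hx' : x ∈ dyadicCube n k' m') :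
    dyadicCube n k m ⊆ dyadicCube n k' m' := by
  obtain ⟨d, rfl⟩ := Int.le.dest hk
  intro y hy
  rw [mem_dyadicCube_iff] at hx hx' hy ⊢
  intro i
  rw [floor_two_zpow_mul_eq_floor_div k' d, hy i, ← hx i, ← floor_two_zpow_mul_eq_floor_div, hx' i]

theorem dyadicCube_eq_pi (n : ℕ) (k : ℤ) (m : Fin n → ℤ) :
    dyadicCube n k m = univ.pi fun i => Ico ((2:ℝ) ^ (-k) * m i) ((2:ℝ) ^ (-k) * (m i + 1)) := by
  ext x
  simp [dyadicCube]

theorem volume_dyadicCube (n : ℕ) (k : ℤ) (m : Fin n → ℤ) :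
    volume (dyadicCube n k m) = ENNReal.ofReal ((2:ℝ) ^ (-k)) ^ n := by
  simp [dyadicCube_eq_pi, volume_pi_pi, Real.volume_Ico, ← mul_sub]

namespace IsDyadicCube

variable {n : ℕ} {Q Q' : Set (Rn n)}

theorem measurableSet (hQ : IsDyadicCube n Q) : MeasurableSet Q := by
  obtain ⟨k, m, rfl⟩ := isDyadicCube_iff.1 hQ
  rw [dyadicCube_eq_pi]
  exact MeasurableSet.univ_pi fun _ => measurableSet_Ico

theorem volume_ne_zero (hQ : IsDyadicCube n Q) : volume Q ≠ 0 := by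
  obtain ⟨k, m, rfl⟩ := isDyadicCube_iff.1 hQ
  rw [volume_dyadicCube]
  exact pow_ne_zero _ (ENNReal.ofReal_pos.2 (by positivity)).ne'

theorem volume_ne_top (hQ : IsDyadicCube n Q) : volume Q ≠ ∞ := by
  obtain ⟨k, m, rfl⟩ := isDyadicCube_iff.1 hQ
  rw [volume_dyadicCube]
  exact ENNReal.pow_ne_top ENNReal.ofReal_ne_top

theorem disjoint_or_subset_or_subset (hQ : IsDyadicCube n Q) (hQ' : IsDyadicCube n Q') :
    Disjoint Q Q' ∨ Q ⊆ Q' ∨ Q' ⊆ Q := by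
  obtain ⟨k, m, rfl⟩ := isDyadicCube_iff.1 hQ
  obtain ⟨k', m', rfl⟩ := isDyadicCube_iff.1 hQ'
  refine or_iff_not_imp_left.2 fun h => ?_
  obtain ⟨x, hx, hx'⟩ := Set.not_disjoint_iff.1 h
  rcases le_total k' k with hk | hk
  · exact Or.inl (dyadicCube_subset_of_mem hk hx hx')
  · exact Or.inr (dyadicCube_subset_of_mem hk hx' hx)

end IsDyadicCube

theorem dAvg_mul_volume_le {n : ℕ} (w : Rn n → ℝ≥0∞) (Q : Set (Rn n)) :
    dAvg w Q * volume Q ≤ ∫⁻ x in Q, w x := by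
  rw [dAvg, mul_right_comm]
  exact mul_le_of_le_one_left' (ENNReal.inv_mul_le_one _)

theorem dAvg_mul_volume {n : ℕ} (w : Rn n → ℝ≥0∞) {Q : Set (Rn n)} (h0 : volume Q ≠ 0)
    (htop : volume Q ≠ ∞) : dAvg w Q * volume Q = ∫⁻ x in Q, w x := by
  rw [dAvg, mul_right_comm, ENNReal.inv_mul_cancel h0 htop, one_mul]

theorem dAvg_ne_top {n : ℕ} {w : Rn n → ℝ≥0∞} (hw : LocInt w) {Q : Set (Rn n)}
    (hQ : IsDyadicCube n Q) : dAvg w Q ≠ ∞ :=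
  ENNReal.mul_ne_top (ENNReal.inv_ne_top.2 hQ.volume_ne_zero) (hw Q hQ).ne

theorem dAvg_eq_zero_of_subset {n : ℕ} {w : Rn n → ℝ≥0∞} {R : Set (Rn n)} (hR : IsDyadicCube n R)
    (hR₀ : dAvg w R = 0) (Q : Set (Rn n)) (hQR : Q ⊆ R) : dAvg w Q = 0 := by
  have hwR : ∫⁻ x in R, w x = 0 := by
    rw [← dAvg_mul_volume w hR.volume_ne_zero hR.volume_ne_top, hR₀, zero_mul]
  rw [dAvg, nonpos_iff_eq_zero.1 ((lintegral_mono_set hQR).trans_eq hwR), mul_zero]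

namespace IsSparse

variable {n : ℕ} {S : Set (Set (Rn n))}

theorem sum_volume_le (hS : IsSparse n S) {F : Finset (Set (Rn n))} (hF : ↑F ⊆ S) :
    ∑ Q ∈ F, volume Q ≤ 2 * volume (⋃ Q ∈ F, Q) := by
  obtain ⟨-, E, hE, hEdisj⟩ := hS
  calc ∑ Q ∈ F, volume Q ≤ ∑ Q ∈ F, 2 * volume (E Q) :=
        Finset.sum_le_sum fun Q hQ => (hE Q (hF hQ)).2.2
    _ = 2 * volume (⋃ Q ∈ F, E Q) := by
        rw [measure_biUnion_finset (hEdisj.mono hF) fun Q hQ => (hE Q (hF hQ)).2.1,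
          Finset.mul_sum]
    _ ≤ 2 * volume (⋃ Q ∈ F, Q) := by
        gcongr with Q hQ
        exact (hE Q (hF hQ)).1

theorem mul_tsum_volume_le (hS : IsSparse n S) {T : Set (Set (Rn n))} (hT : T ⊆ S)
    {c B : ℝ≥0∞} (hB : ∀ F : Finset (Set (Rn n)), ↑F ⊆ T → c * volume (⋃ Q ∈ F, Q) ≤ B) :
    c * ∑' Q : T, volume (Q : Set (Rn n)) ≤ 2 * B := by
  rw [ENNReal.tsum_eq_iSup_sum, ENNReal.mul_iSup]
  refine iSup_le fun F => ?_
  have hF : ↑(F.map (Function.Embedding.subtype _)) ⊆ T := by simp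
  calc c * ∑ Q ∈ F, volume (Q : Set (Rn n))
      = c * ∑ Q ∈ F.map (Function.Embedding.subtype _), volume Q := by
        rw [Finset.sum_map]; rfl
    _ ≤ c * (2 * volume (⋃ Q ∈ F.map (Function.Embedding.subtype _), Q)) := by
        gcongr
        exact hS.sum_volume_le (hF.trans hT)
    _ = 2 * (c * volume (⋃ Q ∈ F.map (Function.Embedding.subtype _), Q)) := mul_left_comm _ _ _
    _ ≤ 2 * B := by gcongr; exact hB _ hF

theorem tsum_volume_le (hS : IsSparse n S) (R : Set (Rn n)) :
    ∑' Q : {Q : Set (Rn n) // Q ∈ S ∧ Q ⊆ R}, volume (Q : Set (Rn n)) ≤ 2 * volume R := by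
  have h := hS.mul_tsum_volume_le (T := {Q | Q ∈ S ∧ Q ⊆ R}) (c := 1) (fun Q hQ => hQ.1)
    fun F hF => by rw [one_mul]; exact measure_mono (iUnion₂_subset fun Q hQ => (hF hQ).2)
  rwa [one_mul] at h

theorem mul_tsum_indicator_volume_le (hS : IsSparse n S) (w : Rn n → ℝ≥0∞) (R : Set (Rn n))
    (t : ℝ≥0∞) :
    t * ∑' Q : {Q : Set (Rn n) // Q ∈ S ∧ Q ⊆ R},
        {Q | t ≤ dAvg w Q}.indicator volume (Q : Set (Rn n)) ≤ 2 * ∫⁻ x in R, w x := by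
  have hsum : ∑' Q : {Q : Set (Rn n) // Q ∈ S ∧ Q ⊆ R}, {Q | t ≤ dAvg w Q}.indicator volume Q.1
      = ∑' Q : ↥({Q | Q ∈ S ∧ Q ⊆ R} ∩ {Q | t ≤ dAvg w Q}), volume (Q : Set (Rn n)) := by
    rw [tsum_subtype ({Q | Q ∈ S ∧ Q ⊆ R} ∩ {Q | t ≤ dAvg w Q}), ← indicator_indicator,
      ← tsum_subtype]
    rfl
  rw [hsum]
  refine hS.mul_tsum_volume_le (fun Q hQ => hQ.1.1) fun F hF => ?_
  have hdyadic : ∀ Q ∈ F, IsDyadicCube n Q := fun Q hQ => hS.1 Q (hF hQ).1.1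
  refine (mul_measure_biUnion_le_setLIntegral F (fun Q hQ => (hdyadic Q hQ).measurableSet)
      (fun Q hQ Q' hQ' => (hdyadic Q hQ).disjoint_or_subset_or_subset (hdyadic Q' hQ'))
      fun Q hQ => ?_).trans (lintegral_mono_set (iUnion₂_subset fun Q hQ => (hF hQ).1.2))
  exact (mul_le_mul_left (hF hQ).2 _).trans (dAvg_mul_volume_le w Q)

theorem tsum_indicator_volume_le_of_two_pow_mul_dAvg_le (hS : IsSparse n S) {w : Rn n → ℝ≥0∞}
    (hw : LocInt w) {R : Set (Rn n)} (hR : IsDyadicCube n R) (hR₀ : dAvg w R ≠ 0) (k : ℕ) :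
    ∑' Q : {Q : Set (Rn n) // Q ∈ S ∧ Q ⊆ R},
        {Q | 2 ^ k * dAvg w R ≤ dAvg w Q}.indicator volume (Q : Set (Rn n))
      ≤ 2 * (2 ^ k)⁻¹ * volume R := by
  have h2k : (2:ℝ≥0∞) ^ k ≠ 0 := pow_ne_zero _ two_ne_zero
  have h2k' : (2:ℝ≥0∞) ^ k ≠ ∞ := ENNReal.pow_ne_top ENNReal.ofNat_ne_top
  refine (ENNReal.mul_le_mul_iff_right (mul_ne_zero h2k hR₀)
    (ENNReal.mul_ne_top h2k' (dAvg_ne_top hw hR))).1 ?_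
  calc _ ≤ 2 * ∫⁻ x in R, w x := hS.mul_tsum_indicator_volume_le w R _
    _ = 2 * (2 ^ k * (2 ^ k)⁻¹) * (dAvg w R * volume R) := by
        rw [ENNReal.mul_inv_cancel h2k h2k', mul_one,
          dAvg_mul_volume w hR.volume_ne_zero hR.volume_ne_top]
    _ = 2 ^ k * dAvg w R * (2 * (2 ^ k)⁻¹ * volume R) := by ring

end IsSparse

theorem tsum_dAvg_rpow_mul_volume_le {n : ℕ} {S : Set (Set (Rn n))} (hS : IsSparse n S)
    {w : Rn n → ℝ≥0∞} (hw : LocInt w) {R : Set (Rn n)} (hR : IsDyadicCube n R) {γ : ℝ}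
    (hγ : 0 ≤ γ) :
    ∑' Q : {Q : Set (Rn n) // Q ∈ S ∧ Q ⊆ R}, dAvg w Q ^ γ * volume (Q : Set (Rn n))
      ≤ dAvg w R ^ γ * ∑' Q : {Q : Set (Rn n) // Q ∈ S ∧ Q ⊆ R}, volume (Q : Set (Rn n))
        + 2 ^ (1 + γ) * (1 - 2 ^ (γ - 1))⁻¹ * dAvg w R ^ γ * volume R := by
  set l := dAvg w R
  obtain hl₀ | hl₀ := eq_or_ne l 0
  · have hQ (Q : {Q : Set (Rn n) // Q ∈ S ∧ Q ⊆ R}) : dAvg w Q = l :=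
      (dAvg_eq_zero_of_subset hR hl₀ Q Q.2.2).trans hl₀.symm
    simp_rw [hQ, ENNReal.tsum_mul_left]
    exact le_self_add
  have hl : l ≠ ∞ := dAvg_ne_top hw hR
  calc ∑' Q : {Q : Set (Rn n) // Q ∈ S ∧ Q ⊆ R}, dAvg w Q ^ γ * volume (Q : Set (Rn n))
      ≤ ∑' Q : {Q : Set (Rn n) // Q ∈ S ∧ Q ⊆ R}, (l ^ γ * volume (Q : Set (Rn n))
          + ∑' k : ℕ, (2 ^ (k + 1) * l) ^ γ *
            {Q | 2 ^ k * l ≤ dAvg w Q}.indicator volume (Q : Set (Rn n))) := by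
        refine ENNReal.tsum_le_tsum fun Q => ?_
        calc _ ≤ (l ^ γ + ∑' k : ℕ, if 2 ^ k * l ≤ dAvg w Q then (2 ^ (k + 1) * l) ^ γ else 0)
              * volume (Q : Set (Rn n)) := by
              gcongr
              exact rpow_le_add_tsum_ite hγ (dAvg_ne_top hw (hS.1 _ Q.2.1)) hl₀ hl
          _ = _ := by
              simp only [add_mul, ← ENNReal.tsum_mul_right, ite_mul, zero_mul, indicator_apply,
                mem_ofPred_eq, mul_ite, mul_zero]
    _ = l ^ γ * ∑' Q : {Q : Set (Rn n) // Q ∈ S ∧ Q ⊆ R}, volume (Q : Set (Rn n))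
          + ∑' k : ℕ, (2 ^ (k + 1) * l) ^ γ * ∑' Q : {Q : Set (Rn n) // Q ∈ S ∧ Q ⊆ R},
            {Q | 2 ^ k * l ≤ dAvg w Q}.indicator volume (Q : Set (Rn n)) := by
        rw [ENNReal.tsum_add, ENNReal.tsum_mul_left, ENNReal.tsum_comm]
        simp only [ENNReal.tsum_mul_left]
    _ ≤ l ^ γ * ∑' Q : {Q : Set (Rn n) // Q ∈ S ∧ Q ⊆ R}, volume (Q : Set (Rn n))
          + ∑' k : ℕ, (2 ^ (k + 1) * l) ^ γ * (2 * (2 ^ k)⁻¹ * volume R) := by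
        gcongr with k
        exact hS.tsum_indicator_volume_le_of_two_pow_mul_dAvg_le hw hR hl₀ k
    _ = _ := by rw [tsum_two_pow_succ_mul_rpow_mul hγ]

/-- Proposition 3.2 (Carleson embedding type estimate):
for sparse `𝒮` and `γ ∈ [0,1)`, `∑_{Q∈𝒮, Q⊆R} ⟨w⟩_Q^γ |Q| ≲ ⟨w⟩_R^γ |R|`. -/
theorem statement12 (γ : ℝ) (hγ0 : 0 ≤ γ) (hγ1 : γ < 1) :
    ∃ C : ℝ≥0∞, C ≠ ∞ ∧
      ∀ (n : ℕ) (S : Set (Set (Rn n))), IsSparse n S →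
      ∀ w : Rn n → ℝ≥0∞, Measurable w → LocInt w →
      ∀ R : Set (Rn n), IsDyadicCube n R →
        (∑' Q : {Q : Set (Rn n) // Q ∈ S ∧ Q ⊆ R}, (dAvg w Q) ^ γ * volume (Q : Set (Rn n)))
          ≤ C * (dAvg w R) ^ γ * volume R := by
  have hc : (2:ℝ≥0∞) ^ (γ - 1) < 1 :=
    ENNReal.rpow_lt_one_of_one_lt_of_neg one_lt_two (by linarith)
  refine ⟨2 + 2 ^ (1 + γ) * (1 - 2 ^ (γ - 1))⁻¹, ?_, fun n S hS w _ hw R hR => ?_⟩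
  · exact ENNReal.add_ne_top.2 ⟨ENNReal.ofNat_ne_top, ENNReal.mul_ne_top
      (ENNReal.rpow_ne_top_of_nonneg (by linarith) ENNReal.ofNat_ne_top)
      (ENNReal.inv_ne_top.2 (tsub_pos_of_lt hc).ne')⟩
  calc _ ≤ _ := tsum_dAvg_rpow_mul_volume_le hS hw hR hγ0
    _ ≤ dAvg w R ^ γ * (2 * volume R)
          + 2 ^ (1 + γ) * (1 - 2 ^ (γ - 1))⁻¹ * dAvg w R ^ γ * volume R := by
        gcongr
        exact hS.tsum_volume_le R
    _ = _ := by ring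

end Paper
end
end

section
/- Let 𝒮 be a collection of dyadic cubes in ℝ^n such that for every Q ∈ 𝒮, |⋃_{Q'∈𝒮, Q'⊊Q} Q'| ≤ |Q|/4. Let g ≥ 0 be locally integrable, let l ∈ ℤ, and set 𝒮_l := {Q ∈ 𝒮 : 2^{−l−1} < ⟨g⟩_Q ≤ 2^{−l}}. For Q ∈ 𝒮_l let E_Q := Q \ ⋃{Q' : Q' ∈ 𝒮_l, Q' ⊊ Q, Q' maximal with respect to inclusion among such cubes}. Then for every Q ∈ 𝒮_l: ⟨g·1_{E_Q}⟩_Q ≥ (1/2)⟨g⟩_Q. -/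
/-!
Let `U` be the union of the maximal cubes of `𝒮_l` strictly inside `Q`, so that `E_Q = Q \ U`.
Maximal dyadic cubes are pairwise disjoint, and each has average at most `2^{-l} < 2⟨g⟩_Q`, so
`∫_U g ≤ 2^{-l} |U| ≤ 2⟨g⟩_Q · |Q|/4 = ½ ∫_Q g` by the packing condition. Hence `Q \ U` carries
at least half of `∫_Q g`.
-/

open MeasureTheory ENNReal NNReal Set

noncomputable section

namespace Paper

lemma Ico_subset_Ico_of_int_mul {a : ℝ} (ha : 0 < a) {N m₁ m₂ : ℤ}
    (h : (Ico (a * m₁) (a * (m₁ + 1)) ∩ Ico (a * N * m₂) (a * N * (m₂ + 1))).Nonempty) :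
    Ico (a * m₁) (a * (m₁ + 1)) ⊆ Ico (a * N * m₂) (a * N * (m₂ + 1)) := by
  obtain ⟨t, ⟨ht₁, ht₂⟩, ⟨ht₃, ht₄⟩⟩ := h
  have hlt₁ : ((N * m₂ : ℤ) : ℝ) < ((m₁ + 1 : ℤ) : ℝ) := by
    push_cast; exact lt_of_mul_lt_mul_left (by linarith) ha.le
  have hlt₂ : ((m₁ : ℤ) : ℝ) < ((N * (m₂ + 1) : ℤ) : ℝ) := by
    push_cast; exact lt_of_mul_lt_mul_left (by linarith) ha.le
  have hle₁ : ((N * m₂ : ℤ) : ℝ) ≤ ((m₁ : ℤ) : ℝ) := by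
    exact_mod_cast Int.lt_add_one_iff.mp (by exact_mod_cast hlt₁)
  have hle₂ : ((m₁ + 1 : ℤ) : ℝ) ≤ ((N * (m₂ + 1) : ℤ) : ℝ) := by
    exact_mod_cast Int.add_one_le_iff.mpr (by exact_mod_cast hlt₂)
  push_cast at hle₁ hle₂
  refine Ico_subset_Ico ?_ ?_
  · rw [mul_assoc]; exact mul_le_mul_of_nonneg_left hle₁ ha.le
  · rw [mul_assoc]; exact mul_le_mul_of_nonneg_left hle₂ ha.le

def dyadicInterval (k m : ℤ) : Set ℝ :=
  Ico ((2 : ℝ) ^ (-k) * m) ((2 : ℝ) ^ (-k) * (m + 1))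

lemma dyadicInterval_subset_of_le {k₁ k₂ m₁ m₂ : ℤ} (hk : k₂ ≤ k₁)
    (h : (dyadicInterval k₁ m₁ ∩ dyadicInterval k₂ m₂).Nonempty) :
    dyadicInterval k₁ m₁ ⊆ dyadicInterval k₂ m₂ := by
  obtain ⟨e, rfl⟩ := Int.exists_add_of_le hk
  have hscale : (2 : ℝ) ^ (-k₂) = (2 : ℝ) ^ (-(k₂ + e)) * ((2 ^ e : ℤ) : ℝ) := by
    rw [Int.cast_pow, Int.cast_ofNat, ← zpow_natCast, ← zpow_add₀ two_ne_zero]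
    ring_nf
  unfold dyadicInterval at h ⊢
  rw [hscale] at h ⊢
  exact Ico_subset_Ico_of_int_mul (zpow_pos two_pos _) h

lemma IsDyadicCube.exists_eq_pi {n : ℕ} {Q : Set (Rn n)} (hQ : IsDyadicCube n Q) :
    ∃ (k : ℤ) (m : Fin n → ℤ), Q = univ.pi fun i => dyadicInterval k (m i) := by
  obtain ⟨k, m, rfl⟩ := hQ
  exact ⟨k, m, by ext x; simp [dyadicInterval]⟩

lemma IsDyadicCube.measurableSet_s14 {n : ℕ} {Q : Set (Rn n)} (hQ : IsDyadicCube n Q) :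
    MeasurableSet Q := by
  obtain ⟨k, m, rfl⟩ := hQ.exists_eq_pi
  exact .univ_pi fun _ => measurableSet_Ico

lemma IsDyadicCube.volume_eq {n : ℕ} {Q : Set (Rn n)} (hQ : IsDyadicCube n Q) :
    ∃ k : ℤ, volume Q = ENNReal.ofReal ((2 : ℝ) ^ (-k)) ^ n := by
  obtain ⟨k, m, rfl⟩ := hQ.exists_eq_pi
  have hlen : ∀ i, volume (dyadicInterval k (m i)) = ENNReal.ofReal ((2 : ℝ) ^ (-k)) := by
    intro i; rw [dyadicInterval, Real.volume_Ico]; ring_nf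
  exact ⟨k, by rw [volume_pi_pi, Finset.prod_congr rfl fun i _ => hlen i, Fin.prod_const]⟩

lemma IsDyadicCube.volume_ne_zero_s14 {n : ℕ} {Q : Set (Rn n)} (hQ : IsDyadicCube n Q) :
    volume Q ≠ 0 := by
  obtain ⟨k, hk⟩ := hQ.volume_eq
  rw [hk]
  exact pow_ne_zero _ (ENNReal.ofReal_pos.mpr (zpow_pos two_pos _)).ne'

lemma IsDyadicCube.volume_ne_top_s14 {n : ℕ} {Q : Set (Rn n)} (hQ : IsDyadicCube n Q) :
    volume Q ≠ ∞ := by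
  obtain ⟨k, hk⟩ := hQ.volume_eq
  rw [hk]
  exact ENNReal.pow_ne_top ENNReal.ofReal_ne_top

lemma countable_setOf_isDyadicCube (n : ℕ) : {Q : Set (Rn n) | IsDyadicCube n Q}.Countable :=
  .mono (by rintro Q ⟨k, m, rfl⟩; exact ⟨(k, m), rfl⟩) (countable_range fun p : ℤ × (Fin n → ℤ) =>
    {x : Rn n | ∀ i, (2 : ℝ) ^ (-p.1) * p.2 i ≤ x i ∧ x i < (2 : ℝ) ^ (-p.1) * (p.2 i + 1)})

lemma IsDyadicCube.subset_or_subset {n : ℕ} {Q₁ Q₂ : Set (Rn n)} (h₁ : IsDyadicCube n Q₁)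
    (h₂ : IsDyadicCube n Q₂) (h : (Q₁ ∩ Q₂).Nonempty) : Q₁ ⊆ Q₂ ∨ Q₂ ⊆ Q₁ := by
  obtain ⟨k₁, m₁, rfl⟩ := h₁.exists_eq_pi
  obtain ⟨k₂, m₂, rfl⟩ := h₂.exists_eq_pi
  rw [← pi_inter_distrib, univ_pi_nonempty_iff] at h
  rcases le_total k₂ k₁ with hk | hk
  · exact .inl <| pi_mono fun i _ => dyadicInterval_subset_of_le hk (h i)
  · exact .inr <| pi_mono fun i _ => dyadicInterval_subset_of_le hk (inter_comm _ _ ▸ h i)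

lemma pairwiseDisjoint_of_isAntichain {n : ℕ} {M : Set (Set (Rn n))}
    (hM : ∀ Q ∈ M, IsDyadicCube n Q) (hA : IsAntichain (· ⊆ ·) M) : M.PairwiseDisjoint id := by
  intro Q₁ h₁ Q₂ h₂ hne
  rw [Function.onFun, id, id, Set.disjoint_iff_inter_eq_empty]
  by_contra hcon
  rcases (hM Q₁ h₁).subset_or_subset (hM Q₂ h₂) (nonempty_iff_ne_empty.mpr hcon) with hsub | hsub
  · exact hA h₁ h₂ hne hsub
  · exact hA h₂ h₁ hne.symm hsub

section Integrals

variable {α : Type*} [MeasurableSpace α] {μ : Measure α} {f : α → ℝ≥0∞}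

lemma setLIntegral_biUnion_le_mul_measure {M : Set (Set α)} (hMc : M.Countable)
    (hMd : M.PairwiseDisjoint id) (hMm : ∀ s ∈ M, MeasurableSet s) {c : ℝ≥0∞}
    (hle : ∀ s ∈ M, ∫⁻ x in s, f x ∂μ ≤ c * μ s) :
    ∫⁻ x in ⋃ s ∈ M, s, f x ∂μ ≤ c * μ (⋃ s ∈ M, s) := by
  calc ∫⁻ x in ⋃ s ∈ M, s, f x ∂μ = ∑' s : M, ∫⁻ x in s, f x ∂μ :=
        lintegral_biUnion hMc hMm hMd f
    _ ≤ ∑' s : M, c * μ s := ENNReal.tsum_le_tsum fun s => hle s s.2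
    _ = c * μ (⋃ s ∈ M, s) := by
      rw [ENNReal.tsum_mul_left]; exact congrArg _ (measure_biUnion hMc hMd hMm).symm

lemma half_setLIntegral_le_setLIntegral_diff {s t : Set α} (ht : MeasurableSet t) (hts : t ⊆ s)
    (hfin : ∫⁻ x in s, f x ∂μ ≠ ∞) (h : ∫⁻ x in t, f x ∂μ ≤ (∫⁻ x in s, f x ∂μ) / 2) :
    (∫⁻ x in s, f x ∂μ) / 2 ≤ ∫⁻ x in s \ t, f x ∂μ := by
  have hsplit := lintegral_inter_add_sdiff (μ := μ) f s ht
  rw [inter_eq_right.mpr hts] at hsplit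
  rw [← ENNReal.sub_half hfin, tsub_le_iff_right]
  calc ∫⁻ x in s, f x ∂μ = ∫⁻ x in t, f x ∂μ + ∫⁻ x in s \ t, f x ∂μ := hsplit.symm
    _ ≤ (∫⁻ x in s, f x ∂μ) / 2 + ∫⁻ x in s \ t, f x ∂μ := by gcongr
    _ = _ := add_comm _ _

end Integrals

section Averages

variable {n : ℕ} {g : Rn n → ℝ≥0∞} {Q : Set (Rn n)}

lemma setLIntegral_eq_dAvg_mul (hQ₀ : volume Q ≠ 0) (hQ : volume Q ≠ ∞) :
    ∫⁻ x in Q, g x = dAvg g Q * volume Q := by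
  rw [dAvg, mul_comm, ← mul_assoc, ENNReal.mul_inv_cancel hQ₀ hQ, one_mul]

lemma dAvg_indicator {E : Set (Rn n)} (hE : MeasurableSet E) (hEQ : E ⊆ Q) :
    dAvg (E.indicator g) Q = (volume Q)⁻¹ * ∫⁻ x in E, g x := by
  rw [dAvg, lintegral_indicator hE, Measure.restrict_restrict hE, inter_eq_left.mpr hEQ]

lemma half_dAvg_le_dAvg_indicator_diff (hQm : MeasurableSet Q) (hQ₀ : volume Q ≠ 0)
    (hQ : volume Q ≠ ∞) {U : Set (Rn n)} (hU : MeasurableSet U) (hUQ : U ⊆ Q) {c : ℝ≥0∞}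
    (hint : ∫⁻ x in U, g x ≤ c * volume U) (hvol : volume U ≤ volume Q / 4)
    (hc : c ≤ 2 * dAvg g Q) (hfin : dAvg g Q ≠ ∞) :
    (1 / 2 : ℝ≥0∞) * dAvg g Q ≤ dAvg ((Q \ U).indicator g) Q := by
  have hQint := setLIntegral_eq_dAvg_mul (g := g) hQ₀ hQ
  have hhalf : ∫⁻ x in U, g x ≤ (∫⁻ x in Q, g x) / 2 :=
    calc ∫⁻ x in U, g x ≤ c * volume U := hint
      _ ≤ 2 * dAvg g Q * (volume Q / 4) := by gcongr
      _ = (∫⁻ x in Q, g x) / 2 := by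
        rw [hQint, ENNReal.div_eq_inv_mul, ENNReal.div_eq_inv_mul,
          show (4 : ℝ≥0∞) = 2 * 2 by norm_num, ENNReal.mul_inv (by simp) (by simp)]
        calc 2 * dAvg g Q * (2⁻¹ * 2⁻¹ * volume Q)
            = (2 * 2⁻¹) * (2⁻¹ * (dAvg g Q * volume Q)) := by ring
          _ = _ := by rw [ENNReal.mul_inv_cancel two_ne_zero ofNat_ne_top, one_mul]
  have hdiff := half_setLIntegral_le_setLIntegral_diff hU hUQ
    (hQint ▸ ENNReal.mul_ne_top hfin hQ) hhalf
  rw [dAvg_indicator (hQm.diff hU) sdiff_subset, dAvg]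
  calc (1 / 2 : ℝ≥0∞) * ((volume Q)⁻¹ * ∫⁻ x in Q, g x)
      = (volume Q)⁻¹ * ((∫⁻ x in Q, g x) / 2) := by
        simp only [one_div, ENNReal.div_eq_inv_mul]; ring
    _ ≤ _ := by gcongr

end Averages

lemma two_rpow_eq_two_mul_rpow_sub_one (x : ℝ) : (2 : ℝ≥0∞) ^ x = 2 * 2 ^ (x - 1) := by
  conv_lhs => rw [show x = 1 + (x - 1) by ring]
  rw [ENNReal.rpow_add _ _ two_ne_zero ofNat_ne_top, ENNReal.rpow_one]

theorem statement14_general (n : ℕ) (S : Set (Set (Rn n))) (hS : ∀ Q ∈ S, IsDyadicCube n Q)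
    (hpack : ∀ Q ∈ S, volume (⋃ Q' ∈ {Q' | Q' ∈ S ∧ Q' ⊂ Q}, Q') ≤ volume Q / 4)
    (g : Rn n → ℝ≥0∞) (l : ℤ)
    (Sl : Set (Set (Rn n)))
    (hSl : Sl = {Q' | Q' ∈ S ∧ (2 : ℝ≥0∞) ^ (-(l : ℝ) - 1) < dAvg g Q' ∧
      dAvg g Q' ≤ (2 : ℝ≥0∞) ^ (-(l : ℝ))})
    (Q : Set (Rn n)) (hQ : Q ∈ Sl)
    (EQ : Set (Rn n))
    (hEQ : EQ = Q \ ⋃ Q' ∈ {Q' | Q' ∈ Sl ∧ Q' ⊂ Q ∧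
        ∀ Q2 ∈ Sl, Q2 ⊂ Q → Q' ⊆ Q2 → Q2 = Q'}, Q') :
    (1 / 2 : ℝ≥0∞) * dAvg g Q ≤ dAvg (EQ.indicator g) Q := by
  have hSl_mem : ∀ {Q'}, Q' ∈ Sl → Q' ∈ S ∧ (2 : ℝ≥0∞) ^ (-(l : ℝ) - 1) < dAvg g Q' ∧
      dAvg g Q' ≤ (2 : ℝ≥0∞) ^ (-(l : ℝ)) := fun h => by rwa [hSl] at h
  obtain ⟨hQS, hQlow, hQhigh⟩ := hSl_mem hQ
  have hQdy := hS Q hQS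
  set M := {Q' | Q' ∈ Sl ∧ Q' ⊂ Q ∧ ∀ Q2 ∈ Sl, Q2 ⊂ Q → Q' ⊆ Q2 → Q2 = Q'}
  have hMdy : ∀ Q' ∈ M, IsDyadicCube n Q' := fun Q' h => hS Q' (hSl_mem h.1).1
  have hMm : ∀ Q' ∈ M, MeasurableSet Q' := fun Q' h => (hMdy Q' h).measurableSet_s14
  have hMc : M.Countable := (countable_setOf_isDyadicCube n).mono hMdy
  have hMd : M.PairwiseDisjoint id := pairwiseDisjoint_of_isAntichain hMdy
    fun Q₁ h₁ Q₂ h₂ hne hsub => hne (h₁.2.2 Q₂ h₂.1 h₂.2.1 hsub).symm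
  subst hEQ
  refine half_dAvg_le_dAvg_indicator_diff hQdy.measurableSet_s14 hQdy.volume_ne_zero_s14
    hQdy.volume_ne_top_s14 (.biUnion hMc hMm) (iUnion₂_subset fun Q' h => h.2.1.subset)
    (c := 2 ^ (-(l : ℝ))) ?_ ?_ ?_ ?_
  · refine setLIntegral_biUnion_le_mul_measure hMc hMd hMm fun Q' h => ?_
    have hQ' := hMdy Q' h
    rw [setLIntegral_eq_dAvg_mul hQ'.volume_ne_zero_s14 hQ'.volume_ne_top_s14]
    gcongr
    exact (hSl_mem h.1).2.2
  · refine (measure_mono (biUnion_subset_biUnion_left ?_)).trans (hpack Q hQS)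
    exact fun Q' h => ⟨(hSl_mem h.1).1, h.2.1⟩
  · rw [two_rpow_eq_two_mul_rpow_sub_one]
    gcongr
  · exact ne_top_of_le_ne_top (ENNReal.rpow_ne_top_of_ne_zero two_ne_zero ofNat_ne_top) hQhigh

/-- Section 4: for a `1/4`-packed collection, the pieces `E_Q` retain half of the average:
`⟨g 1_{E_Q}⟩_Q ≥ ½ ⟨g⟩_Q` for `Q ∈ 𝒮_l`. -/
theorem statement14 (n : ℕ) (S : Set (Set (Rn n))) (hS : ∀ Q ∈ S, IsDyadicCube n Q)
    (hpack : ∀ Q ∈ S, volume (⋃ Q' ∈ {Q' | Q' ∈ S ∧ Q' ⊂ Q}, Q') ≤ volume Q / 4)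
    (g : Rn n → ℝ≥0∞) (hg : Measurable g) (hgl : LocInt g) (l : ℤ)
    (Sl : Set (Set (Rn n)))
    (hSl : Sl = {Q' | Q' ∈ S ∧ (2 : ℝ≥0∞) ^ (-(l : ℝ) - 1) < dAvg g Q' ∧
      dAvg g Q' ≤ (2 : ℝ≥0∞) ^ (-(l : ℝ))})
    (Q : Set (Rn n)) (hQ : Q ∈ Sl)
    (EQ : Set (Rn n))
    (hEQ : EQ = Q \ ⋃ Q' ∈ {Q' | Q' ∈ Sl ∧ Q' ⊂ Q ∧
        ∀ Q2 ∈ Sl, Q2 ⊂ Q → Q' ⊆ Q2 → Q2 = Q'}, Q') :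
    (1 / 2 : ℝ≥0∞) * dAvg g Q ≤ dAvg (EQ.indicator g) Q :=
  statement14_general n S hS hpack g l Sl hSl Q hQ EQ hEQ

end Paper
end
end
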